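/- Let Ω be a Cantor group and T : Ω → Ω a minimal translation. Then the set 𝔑 = {f ∈ C(Ω,ℝ) : for every ω ∈ Ω the spectrum of H_ω has empty interior} is a G_δ subset of C(Ω,ℝ). -/

import Mathlib

/-!
Write `H (f, ω) = Δ + M (n ↦ f (ω + n • α))`; the map `(f, ω) ↦ H (f, ω)` is norm-continuous
since translations act continuously on `C(Ω, ℝ)` for compact `Ω`. Testing the interior against
a countable basis `U` of `ℝ`, the set is the countable intersection of the complements of the
projections to `C(Ω, ℝ)` of `{(f, ω) | U ⊆ spectrum ℝ (H (f, ω))}`. These sets are closed, since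
invertibility is an open condition, and projecting along the compact factor `Ω` keeps them closed.
-/

open Set TopologicalSpace
open scoped ENNReal

noncomputable section

theorem Memℓp.comp_equiv {α β E : Type*} [NormedAddCommGroup E] {p : ℝ≥0∞} {f : α → E}
    (hf : Memℓp f p) (e : β ≃ α) : Memℓp (f ∘ e) p := by
  rcases p.trichotomy with rfl | rfl | hp
  · exact memℓp_zero (hf.finite_dsupport.preimage e.injective.injOn)
  · exact memℓp_infty (e.surjective.range_comp (fun i => ‖f i‖) ▸ hf.bddAbove)
  · exact memℓp_gen (e.summable_iff.mpr (hf.summable hp))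

namespace lp

section CompEquiv

variable {α β E : Type*} [NormedAddCommGroup E] {p : ℝ≥0∞} [Fact (1 ≤ p)]

theorem norm_comp_equiv_le (f : lp (fun _ : α => E) p) (e : β ≃ α) :
    ‖(⟨f ∘ e, (lp.memℓp f).comp_equiv e⟩ : lp (fun _ : β => E) p)‖ ≤ ‖f‖ := by
  rcases p.dichotomy with rfl | hp
  · exact norm_le_of_forall_le (norm_nonneg f) fun i =>
      norm_apply_le_norm ENNReal.top_ne_zero f (e i)
  · refine norm_le_of_forall_sum_le (zero_lt_one.trans_le hp) (norm_nonneg f) fun s => ?_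
    calc ∑ i ∈ s, ‖f (e i)‖ ^ p.toReal
        = ∑ i ∈ s.map e.toEmbedding, ‖f i‖ ^ p.toReal :=
          (Finset.sum_map s e.toEmbedding (fun i => ‖f i‖ ^ p.toReal)).symm
      _ ≤ ‖f‖ ^ p.toReal := sum_rpow_le_norm_rpow (zero_lt_one.trans_le hp) f _

variable (𝕜 : Type*) [NormedField 𝕜] [NormedSpace 𝕜 E]

def compEquivCLM (e : β ≃ α) : lp (fun _ : α => E) p →L[𝕜] lp (fun _ : β => E) p :=
  LinearMap.mkContinuous
    { toFun f := ⟨f ∘ e, (lp.memℓp f).comp_equiv e⟩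
      map_add' _ _ := rfl
      map_smul' _ _ := rfl }
    1 fun f => (one_mul ‖f‖).symm ▸ norm_comp_equiv_le f e

@[simp]
theorem compEquivCLM_apply (e : β ≃ α) (f : lp (fun _ : α => E) p) (i : β) :
    compEquivCLM 𝕜 e f i = f (e i) := rfl

end CompEquiv

def mulCLM {ι : Type*} (𝕜 : Type*) [RCLike 𝕜] (p : ℝ≥0∞) [Fact (1 ≤ p)] :
    lp (fun _ : ι => 𝕜) ∞ →L[𝕜] lp (fun _ : ι => 𝕜) p →L[𝕜] lp (fun _ : ι => 𝕜) p :=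
  holderL p (fun _ => ContinuousLinearMap.mul 𝕜 𝕜) (K := 1) fun _ =>
    (ContinuousLinearMap.opNorm_mul_le 𝕜 𝕜).trans_eq NNReal.coe_one.symm

@[simp]
theorem mulCLM_apply {ι 𝕜 : Type*} [RCLike 𝕜] {p : ℝ≥0∞} [Fact (1 ≤ p)]
    (c : lp (fun _ : ι => 𝕜) ∞) (f : lp (fun _ : ι => 𝕜) p) (i : ι) :
    mulCLM 𝕜 p c f i = c i * f i := rfl

end lp

namespace ContinuousMap

variable {ι Ω E : Type*} [TopologicalSpace Ω] [CompactSpace Ω] [NormedAddCommGroup E]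

def sampleℓInfty (x : ι → Ω) (g : C(Ω, E)) : lp (fun _ : ι => E) ∞ :=
  ⟨fun i => g (x i), memℓp_infty ⟨‖g‖, by rintro _ ⟨i, rfl⟩; exact g.norm_coe_le_norm _⟩⟩

theorem lipschitzWith_one_sampleℓInfty (x : ι → Ω) :
    LipschitzWith 1 (sampleℓInfty (E := E) x) :=
  LipschitzWith.of_dist_le_mul fun g h => by
    rw [NNReal.coe_one, one_mul, dist_eq_norm, dist_eq_norm]
    exact lp.norm_le_of_forall_le (norm_nonneg _) fun i => (g - h).norm_coe_le_norm (x i)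

end ContinuousMap

section Spectrum

variable {𝕜 A : Type*} [NormedField 𝕜] [NormedRing A] [NormedAlgebra 𝕜 A] [CompleteSpace A]

theorem spectrum.isClosed_setOf_subset (s : Set 𝕜) : IsClosed {a : A | s ⊆ spectrum 𝕜 a} := by
  simp only [Set.subset_def, ofPred_forall]
  refine isClosed_iInter fun x => isClosed_iInter fun _ => ?_
  exact Units.isOpen.isClosed_compl.preimage (continuous_const.sub continuous_id)

theorem isGδ_setOf_forall_interior_spectrum_eq_empty [SecondCountableTopology 𝕜] {X Ω : Type*}
    [TopologicalSpace X] [TopologicalSpace Ω] [CompactSpace Ω] {S : X × Ω → A}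
    (hS : Continuous S) : IsGδ {x | ∀ ω, interior (spectrum 𝕜 (S (x, ω))) = ∅} := by
  have key : {x | ∀ ω, interior (spectrum 𝕜 (S (x, ω))) = ∅} =
      ⋂ U ∈ {U ∈ countableBasis 𝕜 | U.Nonempty},
        (Prod.fst '' (S ⁻¹' {a | U ⊆ spectrum 𝕜 a}))ᶜ := by
    ext x
    simp only [interior_eq_empty_iff_dense_compl, (isBasis_countableBasis 𝕜).dense_iff,
      inter_compl_nonempty_iff, mem_ofPred_eq, mem_iInter, mem_compl_iff, mem_image, mem_preimage,
      Prod.exists, exists_and_right, exists_eq_right, not_exists, and_imp]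
    exact ⟨fun h U hU hne ω => h ω U hU hne, fun h ω U hU hne => h U hU hne ω⟩
  rw [key]
  refine .biInter ((countable_countableBasis 𝕜).mono fun U hU => hU.1) fun U _ => ?_
  exact (isClosedMap_fst_of_compactSpace _
    ((spectrum.isClosed_setOf_subset U).preimage hS)).isOpen_compl.isGδ

end Spectrum

section Schrodinger

variable {Ω : Type*} [TopologicalSpace Ω] [AddGroup Ω] [IsTopologicalAddGroup Ω] [CompactSpace Ω]

def orbitPotential (α : Ω) (p : C(Ω, ℝ) × Ω) : lp (fun _ : ℤ => ℝ) ∞ :=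
  ContinuousMap.sampleℓInfty (· • α)
    (p.1.comp (ContinuousMap.curry ⟨fun q : Ω × Ω => q.1 + q.2, continuous_add⟩ p.2))

theorem orbitPotential_apply (α : Ω) (p : C(Ω, ℝ) × Ω) (n : ℤ) :
    orbitPotential α p n = p.1 (p.2 + n • α) := rfl

-- For compact `Ω` the sup-norm topology on `C(Ω, ℝ)` is the compact-open one, in which
-- composition is jointly continuous.
theorem continuous_orbitPotential (α : Ω) : Continuous (orbitPotential α) :=
  (ContinuousMap.lipschitzWith_one_sampleℓInfty _).continuous.comp <|
    ContinuousMap.continuous_comp'.comp <|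
      ((ContinuousMap.curry ⟨fun q : Ω × Ω => q.1 + q.2, continuous_add⟩).continuous.comp
        continuous_snd).prodMk continuous_fst

def schrodingerOp (α : Ω) (p : C(Ω, ℝ) × Ω) :
    lp (fun _ : ℤ => ℝ) 2 →L[ℝ] lp (fun _ : ℤ => ℝ) 2 :=
  lp.compEquivCLM ℝ (Equiv.addRight 1) + lp.compEquivCLM ℝ (Equiv.subRight 1) +
    lp.mulCLM ℝ 2 (orbitPotential α p)

theorem continuous_schrodingerOp (α : Ω) : Continuous (schrodingerOp α) :=
  continuous_const.add ((lp.mulCLM ℝ 2).continuous.comp (continuous_orbitPotential α))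

theorem schrodingerOp_apply (α : Ω) (f : C(Ω, ℝ)) (ω : Ω) (ψ : lp (fun _ : ℤ => ℝ) 2) (n : ℤ) :
    schrodingerOp α (f, ω) ψ n = ψ (n + 1) + ψ (n - 1) + f (ω + n • α) * ψ n := by
  simp only [schrodingerOp, add_apply, AddSubgroup.coe_add,
    PreLp.add_apply, lp.compEquivCLM_apply, Equiv.coe_addRight, Equiv.subRight_apply,
    lp.mulCLM_apply, orbitPotential_apply]

theorem forall_apply_eq_iff_eq_schrodingerOp (α : Ω) (f : C(Ω, ℝ)) (ω : Ω)
    (H : lp (fun _ : ℤ => ℝ) 2 →L[ℝ] lp (fun _ : ℤ => ℝ) 2) :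
    (∀ ψ : lp (fun _ : ℤ => ℝ) 2, ∀ n : ℤ,
        H ψ n = ψ (n + 1) + ψ (n - 1) + f (ω + n • α) * ψ n) ↔
      H = schrodingerOp α (f, ω) := by
  refine ⟨fun h => ?_, fun h => h ▸ schrodingerOp_apply α f ω⟩
  ext ψ n
  rw [h ψ n, schrodingerOp_apply]

end Schrodinger

theorem statement5
    (Ω : Type*) [TopologicalSpace Ω] [AddCommGroup Ω] [IsTopologicalAddGroup Ω]
    [CompactSpace Ω] (α : Ω) :
    IsGδ {f : C(Ω, ℝ) |
      ∀ ω : Ω, ∀ H : lp (fun _ : ℤ => ℝ) 2 →L[ℝ] lp (fun _ : ℤ => ℝ) 2,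
        (∀ ψ : lp (fun _ : ℤ => ℝ) 2, ∀ n : ℤ,
            H ψ n = ψ (n + 1) + ψ (n - 1) + f (ω + n • α) * ψ n) →
        interior (spectrum ℝ H) = ∅} := by
  simp only [forall_apply_eq_iff_eq_schrodingerOp, forall_eq]
  exact isGδ_setOf_forall_interior_spectrum_eq_empty (continuous_schrodingerOp α)
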